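/- Let r > 0 and let Q be the uniform distribution on [0, 2πr]. For every n ∈ ℕ with n ≥ 2, the n-th conditional unconstrained quantization error for Q with respect to the conditional set β = {0, 2πr} equals π²r²/(3(n−1)²), and this infimum is attained by the set {(j−1)·2πr/(n−1) : 1 ≤ j ≤ n}. -/

import Mathlib

open MeasureTheory Set Filter

/-- The uniform distribution on `[a, b]`: normalized Lebesgue measure restricted to `[a, b]`. -/
noncomputable def uniformOn (a b : ℝ) : Measure ℝ :=
  (ENNReal.ofReal (b - a))⁻¹ • volume.restrict (Set.Icc a b)

/-- The distortion error of a set `s` of points for the measure `P`. -/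
noncomputable def distortion (P : Measure ℝ) (s : Set ℝ) : ℝ :=
  ∫ x, sInf ((fun a => (x - a) ^ 2) '' s) ∂P

/-- The `n`-th conditional (unconstrained) quantization error for `P` with respect to
the conditional set `β`. -/
noncomputable def condQuantError (P : Measure ℝ) (β : Set ℝ) (n : ℕ) : ℝ :=
  sInf { v : ℝ | ∃ α : Set ℝ, α.Finite ∧ α.ncard ≤ n - β.ncard ∧ v = distortion P (α ∪ β) }

/-!
Between two consecutive quantization points `c ≤ d` the squared distance to the nearest point
integrates to at least `(d - c) ^ 3 / 12`, with equality when `c` and `d` are the nearest points on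
all of `[c, d]`. If `m` points in `[a, b]` include both endpoints, the `m - 1` gaps sum to `b - a`,
so by the power mean inequality the sum of their cubes is at least `(b - a) ^ 3 / (m - 1) ^ 2`,
with equality for the equally spaced grid. Points outside `[a, b]` can be projected onto it
without increasing the error.
-/

theorem Finset.exists_monotone_enum {α : Type*} [LinearOrder α] (t : Finset α)
    (ht : t.Nonempty) :
    ∃ b : ℕ → α, Monotone b ∧ b 0 = t.min' ht ∧ b (t.card - 1) = t.max' ht ∧
      ∀ c ∈ t, ∀ k, c ≤ b k ∨ b (k + 1) ≤ c := by
  have hpos : 0 < t.card := t.card_pos.2 ht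
  set a := t.orderEmbOfFin rfl
  refine ⟨fun k => a ⟨min k (t.card - 1), by omega⟩, fun k l hkl => a.monotone ?_,
    ?_, ?_, ?_⟩
  · exact Fin.mk_le_mk.2 (min_le_min_right _ hkl)
  · simpa using orderEmbOfFin_zero rfl hpos
  · simpa using orderEmbOfFin_last rfl hpos
  · intro c hc k
    obtain ⟨j, rfl⟩ : c ∈ Set.range a := by rwa [range_orderEmbOfFin]
    rcases le_or_gt (j : ℕ) k with hjk | hjk
    · exact .inl (a.monotone (Fin.mk_le_mk.2 (le_min hjk (by omega))))
    · exact .inr (a.monotone (Fin.mk_le_mk.2 ((min_le_left _ _).trans hjk)))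

lemma continuous_inf'_sq_sub (t : Finset ℝ) (ht : t.Nonempty) :
    Continuous fun x : ℝ => t.inf' ht fun a => (x - a) ^ 2 :=
  .finset_inf'_apply ht fun _ _ => by fun_prop

lemma integral_min_sq_sub {c d : ℝ} (hcd : c ≤ d) :
    ∫ x in c..d, min ((x - c) ^ 2) ((x - d) ^ 2) = (d - c) ^ 3 / 12 := by
  set m := (c + d) / 2 with hm
  have hcm : c ≤ m := by linarith
  have hmd : m ≤ d := by linarith
  have left : ∫ x in c..m, min ((x - c) ^ 2) ((x - d) ^ 2) = ∫ x in c..m, (x - c) ^ 2 := by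
    refine intervalIntegral.integral_congr fun x hx => min_eq_left ?_
    rw [uIcc_of_le hcm] at hx
    nlinarith [hx.1, hx.2, hm]
  have right : ∫ x in m..d, min ((x - c) ^ 2) ((x - d) ^ 2) = ∫ x in m..d, (x - d) ^ 2 := by
    refine intervalIntegral.integral_congr fun x hx => min_eq_right ?_
    rw [uIcc_of_le hmd] at hx
    nlinarith [hx.1, hx.2, hm]
  have hcont : Continuous fun x : ℝ => min ((x - c) ^ 2) ((x - d) ^ 2) := by fun_prop
  rw [← intervalIntegral.integral_add_adjacent_intervals (hcont.intervalIntegrable c m)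
    (hcont.intervalIntegrable m d), left, right,
    intervalIntegral.integral_comp_sub_right (fun x => x ^ 2),
    intervalIntegral.integral_comp_sub_right (fun x => x ^ 2), integral_pow, integral_pow]
  ring

section Cells

variable {f : ℝ → ℝ} {b : ℕ → ℝ}

lemma sum_cube_div_le_integral (hf : Continuous f) (hb : Monotone b) (N : ℕ)
    (hcell : ∀ k < N, ∀ x ∈ Icc (b k) (b (k + 1)),
      min ((x - b k) ^ 2) ((x - b (k + 1)) ^ 2) ≤ f x) :
    ∑ k ∈ Finset.range N, (b (k + 1) - b k) ^ 3 / 12 ≤ ∫ x in b 0..b N, f x := by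
  rw [← intervalIntegral.sum_integral_adjacent_intervals fun k _ => hf.intervalIntegrable _ _]
  refine Finset.sum_le_sum fun k hk => ?_
  have hle := hb k.le_succ
  rw [← integral_min_sq_sub hle]
  exact intervalIntegral.integral_mono_on hle (Continuous.intervalIntegrable (by fun_prop) _ _)
    (hf.intervalIntegrable _ _) (hcell k (Finset.mem_range.1 hk))

lemma integral_le_sum_cube_div (hf : Continuous f) (hb : Monotone b) (N : ℕ)
    (hcell : ∀ k < N, ∀ x ∈ Icc (b k) (b (k + 1)),
      f x ≤ min ((x - b k) ^ 2) ((x - b (k + 1)) ^ 2)) :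
    ∫ x in b 0..b N, f x ≤ ∑ k ∈ Finset.range N, (b (k + 1) - b k) ^ 3 / 12 := by
  rw [← intervalIntegral.sum_integral_adjacent_intervals fun k _ => hf.intervalIntegrable _ _]
  refine Finset.sum_le_sum fun k hk => ?_
  have hle := hb k.le_succ
  rw [← integral_min_sq_sub hle]
  exact intervalIntegral.integral_mono_on hle (hf.intervalIntegrable _ _)
    (Continuous.intervalIntegrable (by fun_prop) _ _) (hcell k (Finset.mem_range.1 hk))

end Cells

lemma cube_div_le_integral_inf' (t : Finset ℝ) (ht : t.Nonempty) :
    (t.max' ht - t.min' ht) ^ 3 / (12 * ((t.card : ℝ) - 1) ^ 2) ≤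
      ∫ x in t.min' ht..t.max' ht, t.inf' ht fun a => (x - a) ^ 2 := by
  obtain ⟨b, hb, hb0, hbN, hgap⟩ := t.exists_monotone_enum ht
  set N := t.card - 1
  have hN : (N : ℝ) = t.card - 1 := by rw [Nat.cast_pred (t.card_pos.2 ht)]
  have jensen := pow_sum_div_card_le_sum_pow (s := Finset.range N)
    (fun k _ => sub_nonneg.2 (hb k.le_succ)) 2
  rw [Finset.sum_range_sub, Finset.card_range] at jensen
  rw [← hb0, ← hbN, ← hN]
  calc (b N - b 0) ^ 3 / (12 * (N : ℝ) ^ 2)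
      = (b N - b 0) ^ (2 + 1) / (N : ℝ) ^ 2 / 12 := by ring
    _ ≤ (∑ k ∈ Finset.range N, (b (k + 1) - b k) ^ (2 + 1)) / 12 := by gcongr
    _ = ∑ k ∈ Finset.range N, (b (k + 1) - b k) ^ 3 / 12 := Finset.sum_div ..
    _ ≤ _ := by
      refine sum_cube_div_le_integral (continuous_inf'_sq_sub t ht) hb N fun k _ x hx => ?_
      refine Finset.le_inf' _ _ fun c hc => ?_
      rcases hgap c hc k with hck | hkc
      · exact (min_le_left _ _).trans (by nlinarith [hx.1])
      · exact (min_le_right _ _).trans (by nlinarith [hx.2])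

lemma integral_inf'_le_of_arithProg (t : Finset ℝ) (ht : t.Nonempty) {c h : ℝ} (hh : 0 ≤ h)
    {N : ℕ} (hmem : ∀ k ≤ N, c + k * h ∈ t) :
    ∫ x in c..c + N * h, t.inf' ht (fun a => (x - a) ^ 2) ≤ N * h ^ 3 / 12 := by
  have hb : Monotone fun k : ℕ => c + k * h := fun k l hkl => by simp only; gcongr
  have := integral_le_sum_cube_div (continuous_inf'_sq_sub t ht) hb N fun k hk x _ =>
    le_min (Finset.inf'_le _ (hmem k hk.le)) (Finset.inf'_le _ (hmem (k + 1) hk))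
  simp only [Nat.cast_zero, zero_mul, add_zero, Nat.cast_succ, add_sub_add_left_eq_sub, add_one_mul,
    add_sub_cancel_left, Finset.sum_const, Finset.card_range, nsmul_eq_mul] at this
  linarith

lemma distortion_uniformOn_finset {a b : ℝ} (hab : a < b) (t : Finset ℝ) (ht : t.Nonempty) :
    distortion (uniformOn a b) t =
      (b - a)⁻¹ * ∫ x in a..b, t.inf' ht fun c => (x - c) ^ 2 := by
  have hinf : ∀ x : ℝ,
      sInf ((fun c => (x - c) ^ 2) '' (t : Set ℝ)) = t.inf' ht fun c => (x - c) ^ 2 :=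
    fun x => (t.inf'_eq_csInf_image ht _).symm
  simp only [distortion, uniformOn, hinf]
  rw [integral_smul_measure, ENNReal.toReal_inv, ENNReal.toReal_ofReal (sub_nonneg.2 hab.le),
    integral_Icc_eq_integral_Ioc, ← intervalIntegral.integral_of_le hab.le, smul_eq_mul]

lemma inf'_sq_sub_image_projIcc_le {a b : ℝ} (hab : a ≤ b) (t : Finset ℝ) (ht : t.Nonempty)
    {x : ℝ} (hx : x ∈ Icc a b) :
    ((t.image fun y => (projIcc a b hab y : ℝ)).inf' (ht.image _) fun c => (x - c) ^ 2) ≤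
      t.inf' ht fun c => (x - c) ^ 2 := by
  refine Finset.le_inf' _ _ fun y hy => (Finset.inf'_le _ (Finset.mem_image_of_mem _ hy)).trans ?_
  have hcontr := abs_projIcc_sub_projIcc hab (c := x) (d := y)
  rw [projIcc_of_mem hab hx] at hcontr
  exact sq_le_sq.2 hcontr

lemma le_distortion_uniformOn {a b : ℝ} (hab : a < b) {n : ℕ} {s : Set ℝ} (hs : s.Finite)
    (ha : a ∈ s) (hb : b ∈ s) (hcard : s.ncard ≤ n) :
    (b - a) ^ 2 / (12 * ((n : ℝ) - 1) ^ 2) ≤ distortion (uniformOn a b) s := by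
  obtain ⟨t, rfl⟩ := hs.exists_finset_coe
  have ht : t.Nonempty := ⟨a, ha⟩
  set p : ℝ → ℝ := fun y => projIcc a b hab.le y
  set t' := t.image p
  have hpt' : ∀ y ∈ t', y ∈ Icc a b := by
    simp only [t', Finset.mem_image]
    rintro _ ⟨y, -, rfl⟩
    exact (projIcc a b hab.le y).2
  have ha' : a ∈ t' := Finset.mem_image.2 ⟨a, ha, by simp [p, projIcc_left]⟩
  have hb' : b ∈ t' := Finset.mem_image.2 ⟨b, hb, by simp [p, projIcc_right]⟩
  have hmin : t'.min' (ht.image p) = a :=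
    le_antisymm (t'.min'_le a ha') (t'.le_min' _ a fun y hy => (hpt' y hy).1)
  have hmax : t'.max' (ht.image p) = b :=
    le_antisymm (t'.max'_le _ b fun y hy => (hpt' y hy).2) (t'.le_max' b hb')
  have hcard' : (t'.card : ℝ) ≤ n := by
    rw [Set.ncard_coe_finset] at hcard
    exact_mod_cast Finset.card_image_le.trans hcard
  have htwo : (2 : ℝ) ≤ t'.card := by
    exact_mod_cast Finset.one_lt_card.2 ⟨a, ha', b, hb', hab.ne⟩
  rw [distortion_uniformOn_finset hab t ht]
  calc (b - a) ^ 2 / (12 * ((n : ℝ) - 1) ^ 2)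
      = (b - a)⁻¹ * ((b - a) ^ 3 / (12 * ((n : ℝ) - 1) ^ 2)) := by
        field_simp [(sub_pos.2 hab).ne']
    _ ≤ (b - a)⁻¹ * ((b - a) ^ 3 / (12 * ((t'.card : ℝ) - 1) ^ 2)) := by
        have := sub_pos.2 hab
        gcongr <;> nlinarith
    _ ≤ (b - a)⁻¹ * ∫ x in a..b, t'.inf' (ht.image p) fun c => (x - c) ^ 2 := by
        have := cube_div_le_integral_inf' t' (ht.image p)
        rw [hmin, hmax] at this
        gcongr
    _ ≤ (b - a)⁻¹ * ∫ x in a..b, t.inf' ht fun c => (x - c) ^ 2 := by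
        gcongr ?_ * ?_
        exact intervalIntegral.integral_mono_on hab.le
          ((continuous_inf'_sq_sub _ _).intervalIntegrable _ _)
          ((continuous_inf'_sq_sub _ _).intervalIntegrable _ _)
          fun x hx => inf'_sq_sub_image_projIcc_le hab.le t ht hx

noncomputable def equispacedGrid (L : ℝ) (n : ℕ) : Finset ℝ :=
  (Finset.Icc 1 n).image fun j : ℕ => ((j : ℝ) - 1) * L / ((n : ℝ) - 1)

section Grid

variable {L : ℝ} {n : ℕ}

lemma arithProg_mem_equispacedGrid (hn : 2 ≤ n) {k : ℕ} (hk : k ≤ n - 1) :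
    0 + k * (L / ((n : ℝ) - 1)) ∈ equispacedGrid L n :=
  Finset.mem_image.2 ⟨k + 1, Finset.mem_Icc.2 ⟨by omega, by omega⟩, by push_cast; ring⟩

lemma zero_mem_equispacedGrid (hn : 2 ≤ n) : 0 ∈ equispacedGrid L n := by
  simpa using arithProg_mem_equispacedGrid (L := L) hn (Nat.zero_le _)

lemma self_mem_equispacedGrid (hn : 2 ≤ n) : L ∈ equispacedGrid L n := by
  have hn1 : (n : ℝ) - 1 ≠ 0 := by
    have : (2 : ℝ) ≤ n := by exact_mod_cast hn
    linarith
  simpa [Nat.cast_pred (by omega : 0 < n), mul_div_cancel₀ _ hn1] using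
    arithProg_mem_equispacedGrid (L := L) hn le_rfl

lemma card_equispacedGrid_le : (equispacedGrid L n).card ≤ n :=
  Finset.card_image_le.trans (by simp)

lemma distortion_uniformOn_equispacedGrid (hL : 0 < L) (hn : 2 ≤ n) :
    distortion (uniformOn 0 L) (equispacedGrid L n) = L ^ 2 / (12 * ((n : ℝ) - 1) ^ 2) := by
  have hn1 : 0 < (n : ℝ) - 1 := by
    have : (2 : ℝ) ≤ n := by exact_mod_cast hn
    linarith
  have hne : (equispacedGrid L n).Nonempty := ⟨0, zero_mem_equispacedGrid hn⟩
  refine le_antisymm ?_ ?_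
  · have hint := integral_inf'_le_of_arithProg (equispacedGrid L n) hne (div_nonneg hL.le hn1.le)
      (N := n - 1) fun k hk => arithProg_mem_equispacedGrid hn hk
    rw [Nat.cast_pred (by omega : 0 < n), zero_add, mul_div_cancel₀ _ hn1.ne'] at hint
    rw [distortion_uniformOn_finset hL _ hne, sub_zero]
    calc L⁻¹ * (∫ x in (0 : ℝ)..L, (equispacedGrid L n).inf' hne fun c => (x - c) ^ 2)
        ≤ L⁻¹ * (((n : ℝ) - 1) * (L / ((n : ℝ) - 1)) ^ 3 / 12) := by gcongr
      _ = L ^ 2 / (12 * ((n : ℝ) - 1) ^ 2) := by field_simp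
  · simpa using le_distortion_uniformOn hL (equispacedGrid L n).finite_toSet
      (zero_mem_equispacedGrid hn)
      (self_mem_equispacedGrid hn) ((Set.ncard_coe_finset _).trans_le card_equispacedGrid_le)

end Grid

theorem stmt7 (r : ℝ) (hr : 0 < r) (n : ℕ) (hn : 2 ≤ n) :
    condQuantError (uniformOn 0 (2 * Real.pi * r)) {0, 2 * Real.pi * r} n
      = Real.pi ^ 2 * r ^ 2 / (3 * ((n : ℝ) - 1) ^ 2)
    ∧ distortion (uniformOn 0 (2 * Real.pi * r))
        ((fun j : ℕ => ((j : ℝ) - 1) * (2 * Real.pi * r) / ((n : ℝ) - 1)) '' Set.Icc 1 n)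
      = Real.pi ^ 2 * r ^ 2 / (3 * ((n : ℝ) - 1) ^ 2) := by
  have hval : Real.pi ^ 2 * r ^ 2 / (3 * ((n : ℝ) - 1) ^ 2)
      = (2 * Real.pi * r) ^ 2 / (12 * ((n : ℝ) - 1) ^ 2) := by
    field_simp
    ring
  set L := 2 * Real.pi * r
  have hL : 0 < L := by positivity
  have hgrid :
      (fun j : ℕ => ((j : ℝ) - 1) * L / ((n : ℝ) - 1)) '' Set.Icc 1 n =
        equispacedGrid L n := by
    simp [equispacedGrid]
  rw [hval, hgrid]
  refine ⟨IsLeast.csInf_eq ⟨?_, ?_⟩, distortion_uniformOn_equispacedGrid hL hn⟩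
  · have hβ : {0, L} ⊆ (equispacedGrid L n : Set ℝ) :=
      pair_subset (zero_mem_equispacedGrid hn) (self_mem_equispacedGrid hn)
    refine ⟨equispacedGrid L n \ {0, L}, (equispacedGrid L n).finite_toSet.sdiff, ?_, ?_⟩
    · rw [ncard_sdiff hβ, Set.ncard_coe_finset]
      exact Nat.sub_le_sub_right card_equispacedGrid_le _
    · rw [sdiff_union_of_subset hβ, distortion_uniformOn_equispacedGrid hL hn]
  · rintro v ⟨α, hα, hcard, rfl⟩
    have hunion : (α ∪ {0, L}).ncard ≤ n := by
      have := ncard_union_le α {0, L}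
      rw [ncard_pair hL.ne] at this hcard
      omega
    simpa using le_distortion_uniformOn hL (hα.union (toFinite _)) (by simp) (by simp) hunion
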